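/- Association factor consistency: defining ψ(c,d) ∈ {0,1} on pairs (c_i, d_j) with c_i ∈ {0,…,m} and d_j ∈ {0,…,n}, where ψ(c_i, d_j) = 0 iff (c_i = j and d_j ≠ i) or (c_i ≠ j and d_j = i), a joint configuration (c_1,…,c_n, d_1,…,d_m) satisfies ∏_{i,j} ψ(c_i,d_j) = 1 if and only if the landmark-oriented vector c and the measurement-oriented vector d describe the same partial injective matching between landmarks and measurements. -/
import Mathlib


open Finset

/-- Association factor consistency: with landmark-oriented associations
`c : Fin n → Option (Fin m)` (`c i = some j` means landmark `i` is associated to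
measurement `j`, `none` means misdetection) and measurement-oriented associations
`d : Fin m → Option (Fin n)` (`d j = some i` or clutter/new for `none`), define
`ψ(cᵢ, dⱼ) = 0` iff (`cᵢ = j` and `dⱼ ≠ i`) or (`cᵢ ≠ j` and `dⱼ = i`), else `1`.
Then `∏_{i,j} ψ(cᵢ, dⱼ) = 1` iff `c` and `d` describe the same partial injective
matching between landmarks and measurements. -/
theorem association_factor_consistency (n m : ℕ)
    (c : Fin n → Option (Fin m)) (d : Fin m → Option (Fin n)) :
    (∏ i : Fin n, ∏ j : Fin m,
        (if (c i = some j ∧ d j ≠ some i) ∨ (c i ≠ some j ∧ d j = some i)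
         then (0 : ℝ) else 1)) = 1
      ↔ ∃ M : Finset (Fin n × Fin m),
          (∀ p ∈ M, ∀ q ∈ M, (p.1 = q.1 → p = q) ∧ (p.2 = q.2 → p = q)) ∧
          (∀ i j, (c i = some j ↔ (i, j) ∈ M) ∧ (d j = some i ↔ (i, j) ∈ M)) := by
  have key : (∏ i : Fin n, ∏ j : Fin m,
        (if (c i = some j ∧ d j ≠ some i) ∨ (c i ≠ some j ∧ d j = some i)
         then (0 : ℝ) else 1)) = 1
      ↔ ∀ i j, (c i = some j ↔ d j = some i) := by
    constructor
    · intro h i j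
      by_contra hc
      have hcond : (c i = some j ∧ d j ≠ some i) ∨ (c i ≠ some j ∧ d j = some i) := by
        tauto
      have h0 : (∏ i : Fin n, ∏ j : Fin m,
          (if (c i = some j ∧ d j ≠ some i) ∨ (c i ≠ some j ∧ d j = some i)
           then (0 : ℝ) else 1)) = 0 := by
        apply Finset.prod_eq_zero (Finset.mem_univ i)
        apply Finset.prod_eq_zero (Finset.mem_univ j)
        rw [if_pos hcond]
      rw [h0] at h
      exact zero_ne_one h
    · intro h
      apply Finset.prod_eq_one
      intro i _
      apply Finset.prod_eq_one
      intro j _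
      rw [if_neg]
      have := h i j
      tauto
  rw [key]
  constructor
  · intro h
    refine ⟨Finset.univ.filter (fun p => c p.1 = some p.2), ?_, ?_⟩
    · intro p hp q hq
      simp only [Finset.mem_filter] at hp hq
      constructor
      · intro h1
        have : some p.2 = some q.2 := by rw [← hp.2, ← hq.2, h1]
        exact Prod.ext h1 (Option.some_injective _ this)
      · intro h2
        have hdp : d p.2 = some p.1 := (h p.1 p.2).mp hp.2
        have hdq : d q.2 = some q.1 := (h q.1 q.2).mp hq.2
        rw [h2] at hdp
        rw [hdq] at hdp
        exact Prod.ext (Option.some_injective _ hdp.symm) h2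
    · intro i j
      simp only [Finset.mem_filter, Finset.mem_univ, true_and]
      exact (h i j).symm
  · rintro ⟨M, _, hM⟩ i j
    rw [(hM i j).1, (hM i j).2]
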